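/- arXiv:1709.03429 — 3 statements merged into one kernel-verified Lean document; each statement's English description precedes it below -/
import Mathlib

section
/- Let S₁, …, S_r be strings among which there is a latest member (some S_i with S_i ≻ S_j for all j ≠ i), and let y₁, …, y_k be pairwise distinct events with y_m ∉ S_j for all m, j. Then the family {S₁, …, S_r, {y₁}, …, {y_k}} has a latest member. -/
noncomputable section

abbrev M4 : Type := Fin 4 → ℝ

/-- Minkowski inner product with signature (+,-,-,-). -/
def mdot (x y : M4) : ℝ := x 0 * y 0 - x 1 * y 1 - x 2 * y 2 - x 3 * y 3

/-- `later x y`: x is not in the closed backward light cone of y. -/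
def later (x y : M4) : Prop := ¬ (mdot (x - y) (x - y) ≥ 0 ∧ x 0 - y 0 ≤ 0)

/-- Pointwise posteriority for sets. -/
def setLater (R S : Set M4) : Prop := ∀ x ∈ R, ∀ y ∈ S, later x y

/-- The string with apex x and direction e. -/
def mstring (x e : M4) : Set M4 := {z | ∃ s : ℝ, 0 ≤ s ∧ z = x + s • e}

/-! Causal precedence (membership in the closed past light cone) is a partial order, and a
string with spacelike direction is achronal. If the latest string `S i` is later than every
event, it remains the latest member. Otherwise, among the events `y m` that some `z ∈ S i`
causally precedes, take one with the largest time coordinate. Whatever `y m` causally precedes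
is also causally preceded by `z`: so it lies on no other string (as `S i` is later than those),
not on `S i` (by achronality, it would equal `z`, forcing `y m = z ∈ S i`), and it is no other
event (which would then have a strictly larger time coordinate). -/

def CausalLE (a b : M4) : Prop := 0 ≤ mdot (b - a) (b - a) ∧ a 0 ≤ b 0

lemma not_later_iff_causalLE {a b : M4} : ¬ later a b ↔ CausalLE a b := by
  have hsq : mdot (a - b) (a - b) = mdot (b - a) (b - a) := by simp only [mdot, Pi.sub_apply]; ring
  simp only [later, CausalLE, not_not, hsq, sub_nonpos, ge_iff_le]

lemma mdot_add_add_self (u v : M4) :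
    mdot (u + v) (u + v) = mdot u u + 2 * mdot u v + mdot v v := by
  simp only [mdot, Pi.add_apply]; ring

/-- Reverse Cauchy–Schwarz inequality for future-directed causal vectors. -/
lemma mdot_nonneg_of_causal {u v : M4} (hu : 0 ≤ mdot u u) (hu0 : 0 ≤ u 0)
    (hv : 0 ≤ mdot v v) (hv0 : 0 ≤ v 0) : 0 ≤ mdot u v := by
  simp only [mdot] at *
  have hsq : (u 1 * v 1 + u 2 * v 2 + u 3 * v 3) ^ 2 ≤ (u 0 * v 0) ^ 2 := by
    nlinarith [sq_nonneg (u 1 * v 2 - u 2 * v 1), sq_nonneg (u 1 * v 3 - u 3 * v 1),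
      sq_nonneg (u 2 * v 3 - u 3 * v 2), mul_le_mul hu hv (by positivity) (by positivity)]
  linarith [le_of_sq_le_sq hsq (mul_nonneg hu0 hv0)]

lemma eq_of_causalLE_of_apply_zero_eq {a b : M4} (h : CausalLE a b) (h0 : a 0 = b 0) : a = b := by
  have h := h.1
  simp only [mdot, Pi.sub_apply, h0, sub_self] at h
  have h1 : b 1 - a 1 = 0 := by nlinarith [sq_nonneg (b 2 - a 2), sq_nonneg (b 3 - a 3)]
  have h2 : b 2 - a 2 = 0 := by nlinarith [sq_nonneg (b 1 - a 1), sq_nonneg (b 3 - a 3)]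
  have h3 : b 3 - a 3 = 0 := by nlinarith [sq_nonneg (b 1 - a 1), sq_nonneg (b 2 - a 2)]
  funext i
  fin_cases i <;> simp only [Fin.zero_eta, Fin.mk_one, Fin.reduceFinMk, Fin.isValue] <;> linarith

namespace CausalLE

lemma trans {a b c : M4} (hab : CausalLE a b) (hbc : CausalLE b c) : CausalLE a c := by
  have hcross := mdot_nonneg_of_causal hbc.1 (sub_nonneg.2 hbc.2) hab.1 (sub_nonneg.2 hab.2)
  refine ⟨?_, hab.2.trans hbc.2⟩
  rw [← sub_add_sub_cancel c b a, mdot_add_add_self]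
  linarith [hab.1, hbc.1]

lemma antisymm {a b : M4} (hab : CausalLE a b) (hba : CausalLE b a) : a = b :=
  eq_of_causalLE_of_apply_zero_eq hab (le_antisymm hab.2 hba.2)

lemma apply_zero_lt {a b : M4} (h : CausalLE a b) (hne : a ≠ b) : a 0 < b 0 :=
  h.2.lt_of_ne fun h0 => hne (eq_of_causalLE_of_apply_zero_eq h h0)

end CausalLE

/-- A string with spacelike direction is achronal. -/
lemma eq_of_causalLE_of_mem_mstring {X E z w : M4} (hE : mdot E E = -1)
    (hz : z ∈ mstring X E) (hw : w ∈ mstring X E) (h : CausalLE z w) : z = w := by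
  obtain ⟨s, -, rfl⟩ := hz
  obtain ⟨t, -, rfl⟩ := hw
  have h := h.1
  have hdiff : X + t • E - (X + s • E) = (t - s) • E := by rw [sub_smul]; abel
  have hsmul : mdot ((t - s) • E) ((t - s) • E) = (t - s) ^ 2 * mdot E E := by
    simp only [mdot, Pi.smul_apply, smul_eq_mul]; ring
  rw [hdiff, hsmul, hE] at h
  have : t - s = 0 := by nlinarith [sq_nonneg (t - s)]
  rw [sub_eq_zero.1 this]

lemma not_setLater_singleton_iff {S : Set M4} {p : M4} :
    ¬ setLater S {p} ↔ ∃ z ∈ S, CausalLE z p := by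
  simp only [setLater, Set.mem_singleton_iff, forall_eq, not_forall, not_later_iff_causalLE,
    exists_prop]

lemma setLater_singleton_of_causalLE {S T : Set M4} {z p : M4} (hz : z ∈ S) (hzp : CausalLE z p)
    (hST : setLater S T) : setLater {p} T := by
  rintro _ rfl w hw
  by_contra hpw
  exact not_later_iff_causalLE.2 (hzp.trans (not_later_iff_causalLE.1 hpw)) (hST z hz w hw)

lemma setLater_singleton_mstring {X E z p : M4} (hE : mdot E E = -1) (hz : z ∈ mstring X E)
    (hzp : CausalLE z p) (hp : p ∉ mstring X E) : setLater {p} (mstring X E) := by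
  rintro _ rfl w hw
  by_contra hpw
  have hpw := not_later_iff_causalLE.1 hpw
  obtain rfl := eq_of_causalLE_of_mem_mstring hE hz hw (hzp.trans hpw)
  exact hp (hpw.antisymm hzp ▸ hz)

/-- Strings with a latest member together with distinct events still have a latest member. -/
theorem strings_points_latest (r k : ℕ) (x e : Fin r → M4) (y : Fin k → M4)
    (he : ∀ i, mdot (e i) (e i) = -1)
    (hy : Function.Injective y)
    (hys : ∀ m j, y m ∉ mstring (x j) (e j))
    (hlatest : ∃ i, ∀ j, j ≠ i → setLater (mstring (x i) (e i)) (mstring (x j) (e j))) :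
    ∃ i : Fin r ⊕ Fin k, ∀ j, j ≠ i →
      setLater (Sum.elim (fun i' => mstring (x i') (e i')) (fun m => {y m}) i)
               (Sum.elim (fun i' => mstring (x i') (e i')) (fun m => {y m}) j) := by
  classical
  obtain ⟨i, hi⟩ := hlatest
  let T := Finset.univ.filter fun m => ∃ z ∈ mstring (x i) (e i), CausalLE z (y m)
  rcases T.eq_empty_or_nonempty with hT | hT
  · refine ⟨Sum.inl i, ?_⟩
    rintro (j | m) hj
    · exact hi j (ne_of_apply_ne Sum.inl hj)
    · by_contra h
      have hmT : m ∈ T := Finset.mem_filter.2 ⟨Finset.mem_univ m, not_setLater_singleton_iff.1 h⟩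
      exact Finset.notMem_empty m (hT ▸ hmT)
  · obtain ⟨m, hmT, hmax⟩ := T.exists_max_image (fun m => y m 0) hT
    obtain ⟨z, hz, hzm⟩ := (Finset.mem_filter.1 hmT).2
    refine ⟨Sum.inr m, ?_⟩
    rintro (j | n) hj
    · by_cases hji : j = i
      · subst hji
        exact setLater_singleton_mstring (he j) hz hzm (hys m j)
      · exact setLater_singleton_of_causalLE hz hzm (hi j hji)
    · rintro _ rfl _ rfl
      by_contra hmn
      have hmn := not_later_iff_causalLE.1 hmn
      have hnT : n ∈ T := Finset.mem_filter.2 ⟨Finset.mem_univ n, z, hz, hzm.trans hmn⟩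
      exact (hmax n hnT).not_gt (hmn.apply_zero_lt (hy.ne (ne_of_apply_ne Sum.inr hj).symm))
end
end

section
/- Let e, e' be spacelike unit vectors (e·e = e'·e' = −1) with e ≻ e' (e not in the closed backward light cone of e'). Then there exists a future-pointing timelike vector u with u · e > 0 and u · e' < 0. -/
/-!
Write `c = e·e'`. If `|c| < 1`, the plane spanned by `e` and `e'` is spacelike, so its orthogonal
complement contains a future timelike `W`, and `W + ε (e' - e)` separates for small `ε > 0`.
Otherwise start from the future timelike vector `τ` orthogonal to `e` (resp. `τ'` orthogonal to
`e'`) and push it slightly along `-e` (resp. `e'`). This separates as soon as `τ·e' ≤ 0`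
(resp. `τ'·e ≥ 0`), with strict inequality when `c ≤ 0`. For `c ≤ -1` the hypothesis `e ≻ e'`
gives `e⁰ > e'⁰`, whence `τ'·e - τ·e' = (e⁰ - e'⁰)(1 - c) > 0`; for `c ≥ 1` the Cauchy–Schwarz
inequality for the spatial parts rules out `τ·e' > 0 > τ'·e`.
-/

noncomputable section

open Filter Topology

section MinkowskiAlgebra

variable (x y z : M4) (a : ℝ)

lemma mdot_comm : mdot x y = mdot y x := by
  unfold mdot; ring

lemma mdot_add_left : mdot (x + y) z = mdot x z + mdot y z := by
  simp only [mdot, Pi.add_apply]; ring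

lemma mdot_sub_left : mdot (x - y) z = mdot x z - mdot y z := by
  simp only [mdot, Pi.sub_apply]; ring

lemma mdot_neg_left : mdot (-x) y = -mdot x y := by
  simp only [mdot, Pi.neg_apply]; ring

lemma mdot_smul_left : mdot (a • x) y = a * mdot x y := by
  simp only [mdot, Pi.smul_apply, smul_eq_mul]; ring

lemma sq_spatial_inner_le :
    (x 0 * y 0 - mdot x y) ^ 2 ≤ (x 0 ^ 2 - mdot x x) * (y 0 ^ 2 - mdot y y) := by
  unfold mdot
  nlinarith [sq_nonneg (x 1 * y 2 - x 2 * y 1), sq_nonneg (x 1 * y 3 - x 3 * y 1),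
    sq_nonneg (x 2 * y 3 - x 3 * y 2)]

end MinkowskiAlgebra

def timeAxis : M4 := Pi.single 0 1

lemma mdot_timeAxis_left (x : M4) : mdot timeAxis x = x 0 := by
  simp [mdot, timeAxis]

def IsFutureTimelike (u : M4) : Prop := 0 < mdot u u ∧ 0 < u 0

lemma isOpen_setOf_isFutureTimelike : IsOpen {u : M4 | IsFutureTimelike u} := by
  have hcont : Continuous fun u : M4 => mdot u u := by unfold mdot; fun_prop
  exact (isOpen_lt continuous_const hcont).inter (isOpen_lt continuous_const (continuous_apply 0))

lemma eventually_pos_add_mul {a b : ℝ} (h : 0 < a ∨ 0 ≤ a ∧ 0 < b) :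
    ∀ᶠ ε in 𝓝[>] (0 : ℝ), 0 < a + ε * b := by
  rcases h with ha | ⟨ha, hb⟩
  · have hlim : Tendsto (fun ε : ℝ => a + ε * b) (𝓝 0) (𝓝 a) := by
      have hcont : Continuous fun ε : ℝ => a + ε * b := by fun_prop
      simpa using hcont.tendsto 0
    exact nhdsWithin_le_nhds (hlim.eventually (lt_mem_nhds ha))
  · filter_upwards [self_mem_nhdsWithin] with ε (hε : 0 < ε)
    positivity

lemma exists_separating_of_perturbation {u₀ w e e' : M4} (hu₀ : IsFutureTimelike u₀)
    (he : 0 < mdot u₀ e ∨ 0 ≤ mdot u₀ e ∧ 0 < mdot w e)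
    (he' : mdot u₀ e' < 0 ∨ mdot u₀ e' ≤ 0 ∧ mdot w e' < 0) :
    ∃ u, IsFutureTimelike u ∧ 0 < mdot u e ∧ mdot u e' < 0 := by
  have htime : ∀ᶠ ε in 𝓝[>] (0 : ℝ), IsFutureTimelike (u₀ + ε • w) := by
    have hcont : Continuous fun ε : ℝ => u₀ + ε • w := by fun_prop
    have hnhds : ∀ᶠ ε in 𝓝 (0 : ℝ), u₀ + ε • w ∈ {u | IsFutureTimelike u} :=
      hcont.continuousAt.eventually_mem (by simpa using isOpen_setOf_isFutureTimelike.mem_nhds hu₀)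
    exact nhdsWithin_le_nhds hnhds
  have hpos := eventually_pos_add_mul he
  have hneg := eventually_pos_add_mul (a := -mdot u₀ e') (b := -mdot w e') (by
    rcases he' with h | ⟨h, h'⟩
    · exact Or.inl (by linarith)
    · exact Or.inr ⟨by linarith, by linarith⟩)
  obtain ⟨ε, hε, hεe, hεe'⟩ := (htime.and (hpos.and hneg)).exists
  refine ⟨u₀ + ε • w, hε, ?_, ?_⟩ <;> rw [mdot_add_left, mdot_smul_left] <;> linarith

/-- For `mdot e e = -1`, the projection of the time axis onto the orthogonal complement of `e`. -/
def timeAxisPerp (e : M4) : M4 := timeAxis + e 0 • e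

lemma mdot_timeAxisPerp_left (e x : M4) : mdot (timeAxisPerp e) x = x 0 + e 0 * mdot e x := by
  rw [timeAxisPerp, mdot_add_left, mdot_smul_left, mdot_timeAxis_left]

lemma isFutureTimelike_timeAxisPerp {e : M4} (he : mdot e e = -1) :
    IsFutureTimelike (timeAxisPerp e) := by
  have h0 : timeAxisPerp e 0 = 1 + e 0 ^ 2 := by
    simp [timeAxisPerp, timeAxis, sq]
  refine ⟨?_, by rw [h0]; positivity⟩
  rw [mdot_timeAxisPerp_left, h0, mdot_comm, mdot_timeAxisPerp_left, he]
  nlinarith [sq_nonneg (e 0)]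

lemma exists_separating_of_timeAxisPerp_left {e e' : M4} (he : mdot e e = -1)
    (h : mdot (timeAxisPerp e) e' < 0 ∨ mdot (timeAxisPerp e) e' ≤ 0 ∧ 0 < mdot e e') :
    ∃ u, IsFutureTimelike u ∧ 0 < mdot u e ∧ mdot u e' < 0 := by
  refine exists_separating_of_perturbation (w := -e) (isFutureTimelike_timeAxisPerp he)
    (Or.inr ⟨?_, ?_⟩) ?_
  · rw [mdot_timeAxisPerp_left, he]; linarith
  · rw [mdot_neg_left, he]; norm_num
  · rwa [mdot_neg_left, neg_lt_zero]

lemma exists_separating_of_timeAxisPerp_right {e e' : M4} (he' : mdot e' e' = -1)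
    (h : 0 < mdot (timeAxisPerp e') e ∨ 0 ≤ mdot (timeAxisPerp e') e ∧ 0 < mdot e e') :
    ∃ u, IsFutureTimelike u ∧ 0 < mdot u e ∧ mdot u e' < 0 := by
  refine exists_separating_of_perturbation (w := e') (isFutureTimelike_timeAxisPerp he')
    (by rwa [mdot_comm e' e]) (Or.inr ⟨?_, ?_⟩)
  · rw [mdot_timeAxisPerp_left, he']; linarith
  · rw [he']; norm_num

lemma exists_separating_of_abs_lt_one {e e' : M4} (he : mdot e e = -1) (he' : mdot e' e' = -1)
    (hc : |mdot e e'| < 1) :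
    ∃ u, IsFutureTimelike u ∧ 0 < mdot u e ∧ mdot u e' < 0 := by
  set c := mdot e e' with hcdef
  set α := e 0
  set β := e' 0
  have hc' : mdot e' e = c := mdot_comm _ _
  have hc_gt : -1 < c := (abs_lt.mp hc).1
  have hgram : 0 < 1 - c ^ 2 := sub_pos.2 ((sq_lt_one_iff_abs_lt_one c).2 hc)
  -- the time axis projected onto `span {e, e'}ᗮ`, scaled by the Gram determinant `1 - c²`
  set W : M4 := (1 - c ^ 2) • timeAxis + (α + β * c) • e + (β + α * c) • e' with hW
  have hWe : mdot W e = 0 := by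
    simp only [hW, mdot_add_left, mdot_smul_left, mdot_timeAxis_left, he, hc']; ring
  have hWe' : mdot W e' = 0 := by
    simp only [hW, mdot_add_left, mdot_smul_left, mdot_timeAxis_left, he', hcdef]; ring
  have hW0 : W 0 = (1 - c ^ 2) * (1 + β ^ 2) + (α + β * c) ^ 2 := by
    simp [hW, timeAxis]; ring
  have hW0_pos : 0 < W 0 := by rw [hW0]; positivity
  have hWW : mdot W W = (1 - c ^ 2) * W 0 := by
    nth_rewrite 1 [hW]
    simp only [mdot_add_left, mdot_smul_left, mdot_timeAxis_left, mdot_comm e W, mdot_comm e' W,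
      hWe, hWe']
    ring
  refine exists_separating_of_perturbation (w := e' - e) ⟨?_, hW0_pos⟩
    (Or.inr ⟨hWe.ge, ?_⟩) (Or.inr ⟨hWe'.le, ?_⟩)
  · rw [hWW]; exact mul_pos hgram hW0_pos
  · rw [mdot_sub_left, he, hc']; linarith
  · rw [mdot_sub_left, he', ← hcdef]; linarith

lemma timeAxisPerp_neg_or_pos_of_le_neg_one {e e' : M4} (hc : mdot e e' ≤ -1)
    (hlt : e' 0 < e 0) : mdot (timeAxisPerp e) e' < 0 ∨ 0 < mdot (timeAxisPerp e') e := by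
  rw [mdot_timeAxisPerp_left, mdot_timeAxisPerp_left, mdot_comm e' e]
  by_contra! hne
  nlinarith [mul_pos (sub_pos.2 hlt) (show 0 < 1 - mdot e e' by linarith)]

lemma timeAxisPerp_nonpos_or_nonneg_of_one_le {e e' : M4} (he : mdot e e = -1)
    (he' : mdot e' e' = -1) (hc : 1 ≤ mdot e e') :
    mdot (timeAxisPerp e) e' ≤ 0 ∨ 0 ≤ mdot (timeAxisPerp e') e := by
  rw [mdot_timeAxisPerp_left, mdot_timeAxisPerp_left, mdot_comm e' e]
  have hcs := sq_spatial_inner_le e e'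
  rw [he, he'] at hcs
  set c := mdot e e'
  set α := e 0
  set β := e' 0
  by_contra! hne
  obtain ⟨hg₂, hg₁⟩ := hne
  have hcs' : c ^ 2 - 1 ≤ α * (α + β * c) + β * (β + α * c) := by nlinarith
  have hc2 : 0 ≤ c ^ 2 - 1 := by nlinarith
  have hneg : (c ^ 2 - 1) * (c ^ 2 - 1) < 0 := calc
    (c ^ 2 - 1) * (c ^ 2 - 1) ≤ (c ^ 2 - 1) * (α * (α + β * c) + β * (β + α * c)) :=
      mul_le_mul_of_nonneg_left hcs' hc2
    _ = 2 * c * (α + β * c) * (β + α * c) - (α + β * c) ^ 2 - (β + α * c) ^ 2 := by ring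
    _ < 0 := by nlinarith [mul_pos hg₂ (neg_pos.2 hg₁)]
  exact (mul_self_nonneg _).not_gt hneg

/-- If e ≻ e' on the hyperboloid, a timelike u separates them strictly. -/
theorem exists_separating_timelike (e e' : M4)
    (he : mdot e e = -1) (he' : mdot e' e' = -1)
    (h : ¬ (mdot (e - e') (e - e') ≥ 0 ∧ e 0 ≤ e' 0)) :
    ∃ u : M4, mdot u u > 0 ∧ u 0 > 0 ∧ mdot u e > 0 ∧ mdot u e' < 0 := by
  suffices hsep : ∃ u, IsFutureTimelike u ∧ 0 < mdot u e ∧ mdot u e' < 0 by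
    obtain ⟨u, ⟨huu, hu0⟩, hue, hue'⟩ := hsep
    exact ⟨u, huu, hu0, hue, hue'⟩
  rcases le_or_gt (mdot e e') (-1) with hc | hc
  · have hlt : e' 0 < e 0 := by
      refine lt_of_not_ge fun hle => h ⟨?_, hle⟩
      rw [mdot_sub_left, mdot_comm e, mdot_comm e', mdot_sub_left, mdot_sub_left, he, he',
        mdot_comm e' e]
      linarith
    rcases timeAxisPerp_neg_or_pos_of_le_neg_one hc hlt with h₂ | h₁
    · exact exists_separating_of_timeAxisPerp_left he (Or.inl h₂)
    · exact exists_separating_of_timeAxisPerp_right he' (Or.inl h₁)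
  rcases lt_or_ge (mdot e e') 1 with hc₁ | hc₁
  · exact exists_separating_of_abs_lt_one he he' (abs_lt.2 ⟨hc, hc₁⟩)
  rcases timeAxisPerp_nonpos_or_nonneg_of_one_le he he' hc₁ with h₂ | h₁
  · exact exists_separating_of_timeAxisPerp_left he (Or.inr ⟨h₂, by linarith⟩)
  · exact exists_separating_of_timeAxisPerp_right he' (Or.inr ⟨h₁, by linarith⟩)
end
end

section
/- Let D₁, D₂ be subsets of the spacelike hyperboloid H = {e : e·e = −1} and suppose there is a future-pointing timelike vector u with u·e₁ > 0 > u·e₂ for all e₁ ∈ D₁, e₂ ∈ D₂. If strings S₁ ⊂ ℝ₊·D₁ and S₂ ⊂ ℝ₊·D₂, then S₁ ≻ S₂. -/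
/-!
A future timelike vector `u` pairs non-positively with every past-directed causal vector
(reverse Cauchy–Schwarz). The separation hypothesis makes `u · (z₁ - z₂) > 0` for any
`z₁ = r₁ e₁`, `z₂ = r₂ e₂` in the two cones, so `z₁ - z₂` is never past causal.
-/

noncomputable section

lemma mdot_sub_right (u x y : M4) : mdot u (x - y) = mdot u x - mdot u y := by
  simp only [mdot, Pi.sub_apply]
  ring

lemma mdot_smul_right (u x : M4) (r : ℝ) : mdot u (r • x) = r * mdot u x := by
  simp only [mdot, Pi.smul_apply, smul_eq_mul]
  ring

lemma mdot_nonpos_of_timelike_of_past_causal {u d : M4} (hu : 0 < mdot u u) (hu0 : 0 < u 0)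
    (hd : 0 ≤ mdot d d) (hd0 : d 0 ≤ 0) : mdot u d ≤ 0 := by
  simp only [mdot] at *
  set s := u 1 * d 1 + u 2 * d 2 + u 3 * d 3
  have cauchySchwarz : s ^ 2 ≤ (u 1 ^ 2 + u 2 ^ 2 + u 3 ^ 2) * (d 1 ^ 2 + d 2 ^ 2 + d 3 ^ 2) := by
    nlinarith [sq_nonneg (u 1 * d 2 - u 2 * d 1), sq_nonneg (u 1 * d 3 - u 3 * d 1),
      sq_nonneg (u 2 * d 3 - u 3 * d 2)]
  have spatial_le : (u 1 ^ 2 + u 2 ^ 2 + u 3 ^ 2) * (d 1 ^ 2 + d 2 ^ 2 + d 3 ^ 2)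
      ≤ (u 0 * d 0) ^ 2 := by
    rw [mul_pow]
    exact mul_le_mul (by nlinarith) (by nlinarith) (by positivity) (sq_nonneg _)
  have hs : |s| ≤ |u 0 * d 0| := sq_le_sq.1 (cauchySchwarz.trans spatial_le)
  rw [abs_of_nonpos (mul_nonpos_of_nonneg_of_nonpos hu0.le hd0)] at hs
  linarith [neg_abs_le s]

lemma later_of_mdot_sub_pos {u x y : M4} (hu : 0 < mdot u u) (hu0 : 0 < u 0)
    (h : 0 < mdot u (x - y)) : later x y := fun ⟨hcausal, hpast⟩ =>
  h.not_ge (mdot_nonpos_of_timelike_of_past_causal hu hu0 hcausal (by simpa using hpast))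

theorem cones_later_general (D₁ D₂ : Set M4)
    (u : M4) (hu : mdot u u > 0) (hu0 : u 0 > 0)
    (hsep : ∀ e₁ ∈ D₁, ∀ e₂ ∈ D₂, mdot u e₁ > 0 ∧ mdot u e₂ < 0)
    (x₁ e₁ x₂ e₂ : M4)
    (hS₁ : mstring x₁ e₁ ⊆ {z : M4 | ∃ r : ℝ, 0 < r ∧ ∃ e' ∈ D₁, z = r • e'})
    (hS₂ : mstring x₂ e₂ ⊆ {z : M4 | ∃ r : ℝ, 0 < r ∧ ∃ e' ∈ D₂, z = r • e'}) :
    setLater (mstring x₁ e₁) (mstring x₂ e₂) := by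
  intro z₁ hz₁ z₂ hz₂
  obtain ⟨r₁, hr₁, f₁, hf₁, rfl⟩ := hS₁ hz₁
  obtain ⟨r₂, hr₂, f₂, hf₂, rfl⟩ := hS₂ hz₂
  obtain ⟨h₁, h₂⟩ := hsep f₁ hf₁ f₂ hf₂
  apply later_of_mdot_sub_pos hu hu0
  rw [mdot_sub_right, mdot_smul_right, mdot_smul_right, sub_pos]
  exact (mul_neg_of_pos_of_neg hr₂ h₂).trans (mul_pos hr₁ h₁)

/-- Strings in cones over separated direction sets are ordered. -/
theorem cones_later (D₁ D₂ : Set M4)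
    (hD₁ : D₁ ⊆ {v : M4 | mdot v v = -1}) (hD₂ : D₂ ⊆ {v : M4 | mdot v v = -1})
    (u : M4) (hu : mdot u u > 0) (hu0 : u 0 > 0)
    (hsep : ∀ e₁ ∈ D₁, ∀ e₂ ∈ D₂, mdot u e₁ > 0 ∧ mdot u e₂ < 0)
    (x₁ e₁ x₂ e₂ : M4) (he₁ : mdot e₁ e₁ = -1) (he₂ : mdot e₂ e₂ = -1)
    (hS₁ : mstring x₁ e₁ ⊆ {z : M4 | ∃ r : ℝ, 0 < r ∧ ∃ e' ∈ D₁, z = r • e'})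
    (hS₂ : mstring x₂ e₂ ⊆ {z : M4 | ∃ r : ℝ, 0 < r ∧ ∃ e' ∈ D₂, z = r • e'}) :
    setLater (mstring x₁ e₁) (mstring x₂ e₂) :=
  cones_later_general D₁ D₂ u hu hu0 hsep x₁ e₁ x₂ e₂ hS₁ hS₂
end
end
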